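/- With U_n = ∫_α^1 e^{βt} P_n(t) dt, W_n = (1/β)(e^β − e^{βα}P_n(α)), and Y_n := U_n − W_n, the sequence Y_n satisfies the second-order linear difference equation Y_{n−1} − ((2n+1)/β) Y_n − Y_{n+1} = ((2n+1)/β) W_n for all n ≥ 1. -/

import Mathlib

noncomputable def legendreP (n : ℕ) (t : ℝ) : ℝ :=
  (1 / (2 ^ n * n.factorial : ℝ)) * iteratedDeriv n (fun x : ℝ => (x ^ 2 - 1) ^ n) t

/-!
With `u_k = (X² - 1)^k`, two differentiations give
`u_{n+2}'' = 2(n+2)((2n+3) u_{n+1} + 2(n+1) u_n)` (use `X² = u_1 + 1`); differentiating `n + 1` more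
times and normalising as in Rodrigues' formula yields `P_{n+2}' - P_n' = (2n+3) P_{n+1}`.
Integrating `e^{βt} (P_{n+2} - P_n)'` by parts over `[α, 1]`, where `P_{n+2}(1) = P_n(1) = 1`,
gives `(2n+3) U_{n+1} = -e^{βα}(P_{n+2}(α) - P_n(α)) - β (U_{n+2} - U_n)`, which is the
difference equation after substituting `U = Y + W`.
-/

open Polynomial

namespace Polynomial

theorem iteratedDeriv_eval {𝕜 : Type*} [NontriviallyNormedField 𝕜] (p : 𝕜[X]) (n : ℕ) :
    iteratedDeriv n (fun x => p.eval x) = fun x => (derivative^[n] p).eval x := by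
  induction n generalizing p with
  | zero => rfl
  | succ n ih =>
    have hderiv : deriv (fun x => p.eval x) = fun x => p.derivative.eval x :=
      -- plain `funext` would resolve to `Polynomial.funext`
      _root_.funext fun _ => p.deriv
    rw [iteratedDeriv_succ', hderiv, ih, Function.iterate_succ_apply]

noncomputable def legendre (n : ℕ) : ℝ[X] :=
  C (1 / (2 ^ n * n.factorial : ℝ)) * derivative^[n] ((X ^ 2 - 1) ^ n)

theorem _root_.legendreP_eq_eval_legendre (n : ℕ) (t : ℝ) :
    legendreP n t = (legendre n).eval t := by
  have h : (fun x : ℝ => (x ^ 2 - 1) ^ n) = fun x => ((X ^ 2 - 1 : ℝ[X]) ^ n).eval x := by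
    simp
  rw [legendreP, legendre, h, iteratedDeriv_eval, eval_mul, eval_C]

theorem derivative_X_sq_sub_one_pow_succ (n : ℕ) :
    derivative ((X ^ 2 - 1 : ℝ[X]) ^ (n + 1)) = C (2 * (n + 1 : ℝ)) * X * (X ^ 2 - 1) ^ n := by
  rw [derivative_pow, derivative_sub, derivative_X_pow, derivative_one]
  simp only [map_mul, map_add, map_natCast, map_ofNat, C_1]
  push_cast
  ring

theorem iterate_derivative_two_X_sq_sub_one_pow (n : ℕ) :
    derivative^[2] ((X ^ 2 - 1 : ℝ[X]) ^ (n + 2)) =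
      C (2 * (n + 2) * (2 * n + 3 : ℝ)) * (X ^ 2 - 1) ^ (n + 1) +
        C (4 * (n + 1) * (n + 2 : ℝ)) * (X ^ 2 - 1) ^ n := by
  rw [Function.iterate_succ_apply, Function.iterate_one, derivative_X_sq_sub_one_pow_succ,
    derivative_mul, derivative_C_mul_X, derivative_X_sq_sub_one_pow_succ,
    pow_succ (X ^ 2 - 1 : ℝ[X]) n]
  simp only [map_mul, map_add, map_natCast, map_ofNat, C_1]
  push_cast
  ring

theorem derivative_legendre_add_two (n : ℕ) :
    derivative (legendre (n + 2)) = C (2 * n + 3 : ℝ) * legendre (n + 1) +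
      derivative (legendre n) := by
  simp only [legendre, derivative_C_mul, ← Function.iterate_succ_apply' derivative]
  rw [show (n + 2).succ = n + 1 + 2 from rfl, Function.iterate_add_apply,
    iterate_derivative_two_X_sq_sub_one_pow, iterate_map_add, iterate_derivative_C_mul,
    iterate_derivative_C_mul, mul_add, ← mul_assoc, ← mul_assoc, ← mul_assoc, ← C_mul, ← C_mul,
    ← C_mul]
  congr 3
  · rw [Nat.factorial_succ (n + 1)]
    push_cast
    field_simp
    ring
  · rw [Nat.factorial_succ (n + 1), Nat.factorial_succ n]
    push_cast
    field_simp
    ring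

open Finset in
theorem eval_iterate_derivative_X_sub_C_pow_mul {R : Type*} [CommRing R] (a : R) (n : ℕ)
    (q : R[X]) : (derivative^[n] ((X - C a) ^ n * q)).eval a = n.factorial * q.eval a := by
  rw [iterate_derivative_mul, eval_finsetSum, sum_eq_single_of_mem 0 (by simp)]
  · simp [iterate_derivative_X_sub_pow_self]
  · intro k hk hk0
    rw [iterate_derivative_X_sub_pow, Nat.sub_sub_self (mem_range_succ_iff.mp hk)]
    simp [hk0]

theorem legendre_eval_one (n : ℕ) : (legendre n).eval 1 = 1 := by
  have h : (X ^ 2 - 1 : ℝ[X]) ^ n = (X - C 1) ^ n * (X + 1) ^ n := by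
    rw [← mul_pow, C_1]
    ring
  rw [legendre, eval_mul, eval_C, h, eval_iterate_derivative_X_sub_C_pow_mul]
  simp only [eval_pow, eval_add, eval_X, eval_one]
  field_simp
  norm_num

theorem integral_exp_mul_eval_derivative (p : ℝ[X]) (β a b : ℝ) :
    ∫ t in a..b, Real.exp (β * t) * p.derivative.eval t =
      Real.exp (β * b) * p.eval b - Real.exp (β * a) * p.eval a -
        β * ∫ t in a..b, Real.exp (β * t) * p.eval t := by
  have hexp (t : ℝ) : HasDerivAt (fun t => Real.exp (β * t)) (β * Real.exp (β * t)) t := by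
    simpa [mul_comm] using ((hasDerivAt_id t).const_mul β).exp
  rw [intervalIntegral.integral_mul_deriv_eq_deriv_mul (fun t _ => hexp t)
    (fun t _ => p.hasDerivAt t) ((by fun_prop : Continuous _).intervalIntegrable _ _)
    ((by fun_prop : Continuous _).intervalIntegrable _ _)]
  simp only [mul_assoc, intervalIntegral.integral_const_mul]

theorem integral_exp_mul_legendre_recurrence (β a b : ℝ) (n : ℕ) :
    (2 * n + 3) * ∫ t in a..b, Real.exp (β * t) * (legendre (n + 1)).eval t =
      Real.exp (β * b) * (legendre (n + 2) - legendre n).eval b -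
        Real.exp (β * a) * (legendre (n + 2) - legendre n).eval a -
          β * ((∫ t in a..b, Real.exp (β * t) * (legendre (n + 2)).eval t) -
            ∫ t in a..b, Real.exp (β * t) * (legendre n).eval t) := by
  have h := integral_exp_mul_eval_derivative (legendre (n + 2) - legendre n) β a b
  rw [derivative_sub, derivative_legendre_add_two, add_sub_cancel_right] at h
  simp only [eval_mul, eval_C, eval_sub, mul_left_comm (Real.exp _), mul_sub,
    intervalIntegral.integral_const_mul] at h
  rw [intervalIntegral.integral_sub ((by fun_prop : Continuous _).intervalIntegrable _ _)
    ((by fun_prop : Continuous _).intervalIntegrable _ _)] at h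
  rw [eval_sub, eval_sub]
  linear_combination h

end Polynomial

theorem legendre_exp_difference_equation_general (α β : ℝ) (hβ : β ≠ 0)
    (U W Y : ℕ → ℝ)
    (hU : ∀ n, U n = ∫ t in α..1, Real.exp (β * t) * legendreP n t)
    (hW : ∀ n, W n = (1 / β) * (Real.exp β - Real.exp (β * α) * legendreP n α))
    (hY : ∀ n, Y n = U n - W n)
    (n : ℕ) (hn : 1 ≤ n) :
    Y (n - 1) - ((2 * (n : ℝ) + 1) / β) * Y n - Y (n + 1) =
      ((2 * (n : ℝ) + 1) / β) * W n := by
  obtain ⟨m, rfl⟩ : ∃ m, n = m + 1 := Nat.exists_eq_add_of_le' hn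
  have key := integral_exp_mul_legendre_recurrence β α 1 m
  rw [eval_sub, legendre_eval_one, legendre_eval_one, sub_self, mul_zero, zero_sub] at key
  simp only [hY, hU, hW, legendreP_eq_eval_legendre, Nat.add_sub_cancel, eval_sub] at key ⊢
  rw [show m + 1 + 1 = m + 2 from rfl]
  push_cast
  field_simp
  linear_combination -β * key

/-- With `U_n = ∫_α^1 e^{βt} P_n(t) dt`, `W_n = (1/β)(e^β − e^{βα} P_n(α))` and
`Y_n = U_n − W_n`, the sequence `Y_n` satisfies, for all `n ≥ 1`:
`Y_{n−1} − ((2n+1)/β) Y_n − Y_{n+1} = ((2n+1)/β) W_n`. -/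
theorem legendre_exp_difference_equation (α β : ℝ) (hβ : β ≠ 0)
    (hα : α ∈ Set.Icc (-1 : ℝ) 1) (U W Y : ℕ → ℝ)
    (hU : ∀ n, U n = ∫ t in α..1, Real.exp (β * t) * legendreP n t)
    (hW : ∀ n, W n = (1 / β) * (Real.exp β - Real.exp (β * α) * legendreP n α))
    (hY : ∀ n, Y n = U n - W n)
    (n : ℕ) (hn : 1 ≤ n) :
    Y (n - 1) - ((2 * (n : ℝ) + 1) / β) * Y n - Y (n + 1) =
      ((2 * (n : ℝ) + 1) / β) * W n :=
  legendre_exp_difference_equation_general α β hβ U W Y hU hW hY n hn
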